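/- arXiv:2404.07469 — 4 statements merged into one kernel-verified Lean document; each statement's English description precedes it below -/
import Mathlib

section
/- Let n ≥ 2, m > 0, κ > 0 with m ≤ κ, and let f : [1,∞) → ℝ be continuous with sup_{r≥1} |r^ℓ f(r)| < ∞ for some integer ℓ with 1 ≤ ℓ ≤ 3n−3. Then there is a constant C > 0 depending only on n and ℓ (not on m, κ) such that for all r ≥ 1, r^ℓ · |∫_1^r exp(−(κ/m)(r^n − s^n)) f(s) ds| ≤ C (m/κ) · sup_{s≥1} |s^ℓ f(s)|. -/
open MeasureTheory Set

/-- For `1 ≤ s ≤ r`, `r - s ≤ r^(n+1) - s^(n+1)`. -/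
lemma aux_sub_le_pow_sub (s r : ℝ) (hs : 1 ≤ s) (hsr : s ≤ r) :
    ∀ k : ℕ, r - s ≤ r ^ (k + 1) - s ^ (k + 1) := by
  intro k
  induction k with
  | zero => simp
  | succ k ih =>
    have h1 : (1:ℝ) ≤ r ^ (k + 1) := one_le_pow₀ (hs.trans hsr)
    have h2 : (0:ℝ) ≤ s := by linarith
    have h3 : s ^ (k+1) ≤ r ^ (k+1) := pow_le_pow_left₀ h2 hsr _
    calc r - s ≤ (r ^ (k+1) - s ^ (k+1)) * 1 := by linarith
    _ ≤ (r ^ (k+1) - s ^ (k+1)) * s + (r - s) * r ^ (k+1) - (r - s) * 1 := by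
        nlinarith
    _ ≤ r ^ (k+2) - s ^ (k+2) := by ring_nf; nlinarith [pow_nonneg h2 (k+1)]

/-- Key pointwise bound. -/
lemma aux_exp_bound (n ℓ : ℕ) (hn : 2 ≤ n) (lam s r : ℝ) (hs : 1 ≤ s) (hsr : s ≤ r)
    (hlam : 1 ≤ lam) :
    r ^ ℓ * Real.exp (-lam * (r ^ n - s ^ n)) ≤
      (2 * (ℓ:ℝ) + 1) ^ ℓ * s ^ ℓ * Real.exp (-(lam / 2) * (r - s)) := by
  have hr1 : (1:ℝ) ≤ r := hs.trans hsr
  have hs0 : (0:ℝ) < s := lt_of_lt_of_le one_pos hs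
  have hx0 : 0 ≤ r ^ n - s ^ n := sub_nonneg.2 (pow_le_pow_left₀ (by linarith) hsr n)
  obtain ⟨k, rfl⟩ : ∃ k, n = k + 1 := ⟨n - 1, by omega⟩
  have hxrs : r - s ≤ r ^ (k+1) - s ^ (k+1) := aux_sub_le_pow_sub s r hs hsr k
  set x : ℝ := r ^ (k+1) - s ^ (k+1) with hx
  have hC1 : (1:ℝ) ≤ (2 * (ℓ:ℝ) + 1) ^ ℓ := one_le_pow₀ (by have := Nat.cast_nonneg (α := ℝ) ℓ; linarith)
  rcases le_or_gt r ((2 * (ℓ:ℝ) + 1) * s) with h | h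
  · have h1 : r ^ ℓ ≤ (2 * (ℓ:ℝ) + 1) ^ ℓ * s ^ ℓ := by
      calc r ^ ℓ ≤ ((2 * (ℓ:ℝ) + 1) * s) ^ ℓ := pow_le_pow_left₀ (by linarith) h _
      _ = (2 * (ℓ:ℝ) + 1) ^ ℓ * s ^ ℓ := mul_pow _ _ _
    have h2 : Real.exp (-lam * x) ≤ Real.exp (-(lam / 2) * (r - s)) := by
      apply Real.exp_le_exp.2
      nlinarith [mul_le_mul_of_nonneg_left hxrs (by linarith : (0:ℝ) ≤ lam)]
    have := mul_le_mul h1 h2 (Real.exp_pos _).le (by positivity)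
    linarith
  · -- r > (2ℓ+1) s ; use r^ℓ ≤ s^ℓ exp(x/2)
    set t : ℝ := r / s with htdef
    have hts : r = s * t := by rw [htdef]; field_simp
    have ht : (2 * (ℓ:ℝ) + 1) < t := (lt_div_iff₀ hs0).2 (by linarith)
    have ht1 : (1:ℝ) ≤ t := by
      have hl0 : (0:ℝ) ≤ (ℓ:ℝ) := Nat.cast_nonneg _
      linarith
    have ht0 : (0:ℝ) < t := by linarith
    have hlog : Real.log t ≤ t - 1 := Real.log_le_sub_one_of_pos ht0
    have htn : t ^ 2 ≤ t ^ (k+1) := pow_le_pow_right₀ ht1 (by omega)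
    have hxt : t ^ (k+1) - 1 ≤ x := by
      have h1 : r ^ (k+1) = s ^ (k+1) * t ^ (k+1) := by rw [hts, mul_pow]
      have h2 : (1:ℝ) ≤ s ^ (k+1) := one_le_pow₀ hs
      have h3 : (1:ℝ) ≤ t ^ (k+1) := one_le_pow₀ ht1
      rw [hx, h1]
      nlinarith
    have hlogx : (ℓ:ℝ) * Real.log t ≤ x / 2 := by
      have h1 : (ℓ:ℝ) * Real.log t ≤ (ℓ:ℝ) * (t - 1) :=
        mul_le_mul_of_nonneg_left hlog (by positivity)
      have h2 : (ℓ:ℝ) * (t - 1) ≤ (t ^ 2 - 1) / 2 := by nlinarith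
      nlinarith
    have hrl : r ^ ℓ ≤ s ^ ℓ * Real.exp (x / 2) := by
      have h1 : t ^ ℓ = Real.exp ((ℓ:ℝ) * Real.log t) := by
        rw [Real.exp_nat_mul, Real.exp_log ht0]
      have h2 : t ^ ℓ ≤ Real.exp (x / 2) := by
        rw [h1]; exact Real.exp_le_exp.2 hlogx
      calc r ^ ℓ = s ^ ℓ * t ^ ℓ := by rw [hts, mul_pow]
      _ ≤ s ^ ℓ * Real.exp (x / 2) := by
          exact mul_le_mul_of_nonneg_left h2 (by positivity)
    have hexp : Real.exp (x / 2) * Real.exp (-lam * x) ≤ Real.exp (-(lam / 2) * (r - s)) := by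
      rw [← Real.exp_add]
      apply Real.exp_le_exp.2
      nlinarith [mul_le_mul_of_nonneg_left hxrs (by linarith : (0:ℝ) ≤ lam)]
    calc r ^ ℓ * Real.exp (-lam * x) ≤ (s ^ ℓ * Real.exp (x / 2)) * Real.exp (-lam * x) := by
          exact mul_le_mul_of_nonneg_right hrl (Real.exp_pos _).le
    _ = s ^ ℓ * (Real.exp (x / 2) * Real.exp (-lam * x)) := by ring
    _ ≤ s ^ ℓ * Real.exp (-(lam / 2) * (r - s)) :=
        mul_le_mul_of_nonneg_left hexp (by positivity)
    _ ≤ (2 * (ℓ:ℝ) + 1) ^ ℓ * s ^ ℓ * Real.exp (-(lam / 2) * (r - s)) := by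
        nlinarith [mul_nonneg (pow_nonneg hs0.le ℓ) (Real.exp_pos (-(lam / 2) * (r - s))).le, hC1]

theorem stmt_0 (n ℓ : ℕ) (hn : 2 ≤ n) (hℓ1 : 1 ≤ ℓ) (hℓ2 : ℓ ≤ 3 * n - 3) :
    ∃ C > 0, ∀ (m κ : ℝ) (f : ℝ → ℝ), 0 < m → 0 < κ → m ≤ κ →
      ContinuousOn f (Ici 1) →
      ∀ B : ℝ, (∀ s : ℝ, 1 ≤ s → |s ^ ℓ * f s| ≤ B) →
      ∀ r : ℝ, 1 ≤ r →
        r ^ ℓ * |∫ s in (1:ℝ)..r, Real.exp (-(κ / m) * (r ^ n - s ^ n)) * f s| ≤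
          C * (m / κ) * B := by
  set C₁ : ℝ := (2 * (ℓ:ℝ) + 1) ^ ℓ with hC₁
  have hC₁pos : 0 < C₁ := by positivity
  refine ⟨2 * C₁, by positivity, ?_⟩
  intro m κ f hm hκ hmκ hf B hB r hr
  set lam : ℝ := κ / m with hlamdef
  have hlam1 : 1 ≤ lam := (one_le_div hm).2 hmκ
  have hlam0 : 0 < lam := lt_of_lt_of_le one_pos hlam1
  have hB0 : 0 ≤ B := le_trans (abs_nonneg _) (hB 1 le_rfl)
  have hrpow : (0:ℝ) < r ^ ℓ := by positivity
  -- pointwise bound on [1, r]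
  have key : ∀ s ∈ Icc (1:ℝ) r,
      |Real.exp (-lam * (r ^ n - s ^ n)) * f s| ≤
        (C₁ * B / r ^ ℓ) * Real.exp (-(lam / 2) * (r - s)) := by
    intro s hsmem
    obtain ⟨hs1, hsr⟩ := hsmem
    have hs0 : (0:ℝ) < s := lt_of_lt_of_le one_pos hs1
    have hspow : (0:ℝ) < s ^ ℓ := by positivity
    have hfs : |f s| ≤ B / s ^ ℓ := by
      rw [le_div_iff₀ hspow]
      have := hB s hs1
      rw [abs_mul, abs_of_pos hspow] at this
      linarith [this]
    have haux := aux_exp_bound n ℓ hn lam s r hs1 hsr hlam1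
    rw [abs_mul, abs_of_pos (Real.exp_pos _)]
    have h1 : Real.exp (-lam * (r ^ n - s ^ n)) * |f s| ≤
        Real.exp (-lam * (r ^ n - s ^ n)) * (B / s ^ ℓ) :=
      mul_le_mul_of_nonneg_left hfs (Real.exp_pos _).le
    refine h1.trans ?_
    rw [← mul_div_assoc, div_mul_eq_mul_div, div_le_div_iff₀ hspow hrpow]
    nlinarith [mul_le_mul_of_nonneg_left haux hB0]
  -- integrability
  have hcont_exp : Continuous fun s : ℝ => Real.exp (-lam * (r ^ n - s ^ n)) :=
    Real.continuous_exp.comp (continuous_const.mul (continuous_const.sub (continuous_pow n)))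
  have hint1 : IntervalIntegrable (fun s => Real.exp (-lam * (r ^ n - s ^ n)) * f s)
      volume 1 r := by
    apply ContinuousOn.intervalIntegrable
    rw [uIcc_of_le hr]
    exact hcont_exp.continuousOn.mul (hf.mono (Icc_subset_Ici_self))
  have hint2 : IntervalIntegrable
      (fun s => (C₁ * B / r ^ ℓ) * Real.exp (-(lam / 2) * (r - s))) volume 1 r := by
    exact (continuous_const.mul (Real.continuous_exp.comp
      (continuous_const.mul (continuous_const.sub continuous_id)))).intervalIntegrable _ _
  -- |∫| ≤ ∫ of the dominating function
  have habs : |∫ s in (1:ℝ)..r, Real.exp (-lam * (r ^ n - s ^ n)) * f s| ≤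
      ∫ s in (1:ℝ)..r, |Real.exp (-lam * (r ^ n - s ^ n)) * f s| :=
    intervalIntegral.abs_integral_le_integral_abs hr
  have hmono : (∫ s in (1:ℝ)..r, |Real.exp (-lam * (r ^ n - s ^ n)) * f s|) ≤
      ∫ s in (1:ℝ)..r, (C₁ * B / r ^ ℓ) * Real.exp (-(lam / 2) * (r - s)) :=
    intervalIntegral.integral_mono_on hr hint1.abs hint2 key
  -- compute the exponential integral
  have hFint : (∫ s in (1:ℝ)..r, Real.exp (-(lam / 2) * (r - s))) ≤ 2 / lam := by
    have hderiv : ∀ s ∈ uIcc (1:ℝ) r,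
        HasDerivAt (fun u => (2 / lam) * Real.exp (-(lam / 2) * (r - u)))
          (Real.exp (-(lam / 2) * (r - s))) s := by
      intro s _
      have h1 : HasDerivAt (fun u : ℝ => -(lam / 2) * (r - u)) (lam / 2) s := by
        have := ((hasDerivAt_const s r).sub (hasDerivAt_id s)).const_mul (-(lam / 2))
        simpa using this
      have h2 := (h1.exp).const_mul (2 / lam)
      refine h2.congr_deriv ?_
      field_simp
    have hintc : IntervalIntegrable (fun s => Real.exp (-(lam / 2) * (r - s))) volume 1 r :=
      (Real.continuous_exp.comp
        (continuous_const.mul (continuous_const.sub continuous_id))).intervalIntegrable _ _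
    have heq := intervalIntegral.integral_eq_sub_of_hasDerivAt hderiv hintc
    rw [heq]
    have h1 : (0:ℝ) < Real.exp (-(lam / 2) * (r - 1)) := Real.exp_pos _
    have h2 : Real.exp (-(lam / 2) * (r - r)) = 1 := by norm_num
    rw [h2]
    have : 0 ≤ (2 / lam) * Real.exp (-(lam / 2) * (r - 1)) := by positivity
    calc (2 / lam) * 1 - (2 / lam) * Real.exp (-(lam / 2) * (r - 1)) ≤ 2 / lam * 1 := by
          linarith
    _ = 2 / lam := by ring
  have hconst : (∫ s in (1:ℝ)..r, (C₁ * B / r ^ ℓ) * Real.exp (-(lam / 2) * (r - s)))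
      = (C₁ * B / r ^ ℓ) * ∫ s in (1:ℝ)..r, Real.exp (-(lam / 2) * (r - s)) :=
    intervalIntegral.integral_const_mul _ _
  have hfinal : |∫ s in (1:ℝ)..r, Real.exp (-lam * (r ^ n - s ^ n)) * f s| ≤
      (C₁ * B / r ^ ℓ) * (2 / lam) := by
    refine habs.trans (hmono.trans ?_)
    rw [hconst]
    exact mul_le_mul_of_nonneg_left hFint (by positivity)
  have hgoal : r ^ ℓ * |∫ s in (1:ℝ)..r, Real.exp (-lam * (r ^ n - s ^ n)) * f s| ≤
      r ^ ℓ * ((C₁ * B / r ^ ℓ) * (2 / lam)) :=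
    mul_le_mul_of_nonneg_left hfinal hrpow.le
  have hrw : r ^ ℓ * ((C₁ * B / r ^ ℓ) * (2 / lam)) = 2 * C₁ * (m / κ) * B := by
    rw [hlamdef]
    field_simp
  rw [hrw] at hgoal
  exact hgoal
end

section
/- Let n ≥ 2, m_b > 0, κ > 0 with m_b ≤ κ, and let η : [1,∞) → ℝ be continuous satisfying sup_{s ≥ 1} |s^{n−1} η(s)| ≤ M. Then for all r ≥ 1, |∫_1^r s^{n−1} exp((κ/m_b)(s^n − r^n)) ∫_s^∞ η(τ) τ^{1−2n} dτ ds| ≤ C M (m_b/κ) r^{−2(n−1)}, where C depends only on n. -/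
open MeasureTheory Set

lemma exp_neg_le_inv {x : ℝ} (hx : 0 < x) : Real.exp (-x) ≤ 1 / x := by
  rw [Real.exp_neg]
  have h1 : x ≤ Real.exp x := x.add_one_le_exp.trans' (by linarith)
  rw [inv_eq_one_div]
  exact one_div_le_one_div_of_le hx h1

lemma aux_J (n : ℕ) (hn : 2 ≤ n) (l r : ℝ) (hl : 1 ≤ l) (hr : 1 ≤ r) :
    ∫ s in (1:ℝ)..r, Real.exp (l * (s ^ n - r ^ n)) / s ^ (2*n-2) ≤
      ((2:ℝ) ^ (2*n) + 16) / l / r ^ (2*n-2) := by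
  have hl0 : (0:ℝ) < l := lt_of_lt_of_le one_pos hl
  have hr0 : (0:ℝ) < r := lt_of_lt_of_le one_pos hr
  have hn0 : (0:ℝ) < n := by positivity
  set f : ℝ → ℝ := fun s => Real.exp (l * (s ^ n - r ^ n)) / s ^ (2*n-2) with hf
  have hfc : ContinuousOn f (Ici (1:ℝ)) := by
    apply ContinuousOn.div
    · exact (Real.continuous_exp.comp (continuous_const.mul
        ((continuous_pow n).sub continuous_const))).continuousOn
    · exact (continuous_pow _).continuousOn
    · intro s hs
      simp only [mem_Ici] at hs
      positivity
  have hint : ∀ a b : ℝ, 1 ≤ a → 1 ≤ b → IntervalIntegrable f volume a b := by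
    intro a b ha hb
    refine (hfc.mono ?_).intervalIntegrable
    rw [uIcc]
    exact fun x hx => le_trans (le_min ha hb) hx.1
  set m : ℝ := max 1 (r/2) with hm
  have hm1 : 1 ≤ m := le_max_left _ _
  have hmr : m ≤ r := max_le hr (by linarith)
  have hmhalf : r/2 ≤ m := le_max_right _ _
  have hm0 : (0:ℝ) < m := lt_of_lt_of_le one_pos hm1
  -- split the integral
  rw [← intervalIntegral.integral_add_adjacent_intervals (hint 1 m le_rfl hm1)
    (hint m r hm1 hr)]
  have hrpow : (0:ℝ) < r ^ (2*n-2) := by positivity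
  -- piece 1
  have piece1 : ∫ s in (1:ℝ)..m, f s ≤ 16 / l / r ^ (2*n-2) := by
    have step1 : ∫ s in (1:ℝ)..m, f s ≤ (m - 1) * Real.exp (l * (m ^ n - r ^ n)) := by
      have hb : ∫ s in (1:ℝ)..m, Real.exp (l * (m ^ n - r ^ n)) =
          (m - 1) * Real.exp (l * (m ^ n - r ^ n)) := by
        simp [intervalIntegral.integral_const]
      rw [← hb]
      apply intervalIntegral.integral_mono_on hm1 (hint 1 m le_rfl hm1)
        intervalIntegrable_const
      intro s hs
      have hs1 : 1 ≤ s := hs.1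
      have hsm : s ≤ m := hs.2
      have h1 : (1:ℝ) ≤ s ^ (2*n-2) := one_le_pow₀ hs1
      calc f s ≤ Real.exp (l * (s ^ n - r ^ n)) / 1 := by
              apply div_le_div_of_nonneg_left (Real.exp_pos _).le one_pos h1 |>.trans_eq rfl
        _ = Real.exp (l * (s ^ n - r ^ n)) := by ring
        _ ≤ Real.exp (l * (m ^ n - r ^ n)) := by
              apply Real.exp_le_exp.2
              have : s ^ n ≤ m ^ n := pow_le_pow_left₀ (by linarith) hsm n
              nlinarith
    refine step1.trans ?_
    by_cases hr2 : r ≤ 2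
    · have : m = 1 := max_eq_left (by linarith)
      rw [this]
      simp only [sub_self, zero_mul]
      positivity
    · push_neg at hr2
      have hmhalf' : m = r/2 := max_eq_right (by linarith)
      have hrn : (0:ℝ) < r ^ n := by positivity
      have hmn : m ^ n ≤ r ^ n / 2 := by
        rw [hmhalf', div_pow]
        apply div_le_div_of_nonneg_left hrn.le two_pos ?_ |>.trans_eq rfl
        calc (2:ℝ) = 2^1 := (pow_one 2).symm
          _ ≤ 2^n := pow_le_pow_right₀ one_le_two (by omega)
      have hexp : Real.exp (l * (m ^ n - r ^ n)) ≤ Real.exp (-(l * r ^ n / 2)) := by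
        apply Real.exp_le_exp.2
        nlinarith
      have hsplit : Real.exp (-(l * r ^ n / 2)) ≤ (4 / (l * r ^ n)) * (4 / r ^ n) := by
        have he : Real.exp (-(l * r ^ n / 2)) =
            Real.exp (-(l * r ^ n / 4)) * Real.exp (-(l * r ^ n / 4)) := by
          rw [← Real.exp_add]; ring_nf
        rw [he]
        have h1 : Real.exp (-(l * r ^ n / 4)) ≤ 4 / (l * r ^ n) := by
          have := exp_neg_le_inv (x := l * r ^ n / 4) (by positivity)
          calc Real.exp (-(l * r ^ n / 4)) ≤ 1 / (l * r ^ n / 4) := this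
            _ = 4 / (l * r ^ n) := by field_simp
        have h2 : Real.exp (-(l * r ^ n / 4)) ≤ 4 / r ^ n := by
          have h3 : Real.exp (-(l * r ^ n / 4)) ≤ Real.exp (-(r ^ n / 4)) := by
            apply Real.exp_le_exp.2; nlinarith
          refine h3.trans ?_
          have := exp_neg_le_inv (x := r ^ n / 4) (by positivity)
          calc Real.exp (-(r ^ n / 4)) ≤ 1 / (r ^ n / 4) := this
            _ = 4 / r ^ n := by field_simp
        exact mul_le_mul h1 h2 (Real.exp_pos _).le (by positivity)
      have hfinal : (m - 1) * Real.exp (l * (m ^ n - r ^ n)) ≤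
          r * ((4 / (l * r ^ n)) * (4 / r ^ n)) := by
        have e1 : Real.exp (l * (m ^ n - r ^ n)) ≤ (4 / (l * r ^ n)) * (4 / r ^ n) :=
          hexp.trans hsplit
        have hm1' : 0 ≤ m - 1 := by linarith
        have : m - 1 ≤ r := by linarith
        exact mul_le_mul this e1 (Real.exp_pos _).le (by linarith)
      refine hfinal.trans ?_
      have key : r * r ^ (2*n-2) ≤ r ^ n * r ^ n := by
        calc r * r ^ (2*n-2) = r ^ ((2*n-2)+1) := (pow_succ' r (2*n-2)).symm
          _ ≤ r ^ (n+n) := pow_le_pow_right₀ hr (by omega)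
          _ = r ^ n * r ^ n := pow_add r n n
      rw [div_div, le_div_iff₀ (by positivity)]
      have e : r * (4 / (l * r ^ n) * (4 / r ^ n)) * (l * r ^ (2*n-2))
          = 16 * (r * r ^ (2*n-2)) / (r ^ n * r ^ n) := by field_simp; ring
      rw [e, div_le_iff₀ (by positivity)]
      nlinarith
  -- piece 2
  have piece2 : ∫ s in m..r, f s ≤ (2:ℝ) ^ (2*n) / l / r ^ (2*n-2) := by
    set c : ℝ := (2:ℝ) ^ (2*n-2) / r ^ (2*n-2) with hc
    have hc0 : 0 < c := by positivity
    have hFTC : ∫ s in m..r, c * (s ^ (n-1) * Real.exp (l * (s ^ n - r ^ n))) =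
        c * ((1 - Real.exp (l * (m ^ n - r ^ n))) / (l * n)) := by
      rw [intervalIntegral.integral_const_mul]
      congr 1
      have hd : ∀ s ∈ uIcc m r, HasDerivAt (fun x => Real.exp (l * (x ^ n - r ^ n)) / (l * n))
          (s ^ (n-1) * Real.exp (l * (s ^ n - r ^ n))) s := by
        intro s _
        have h1 : HasDerivAt (fun x : ℝ => l * (x ^ n - r ^ n)) (l * (n * s ^ (n-1))) s :=
          ((hasDerivAt_pow n s).sub_const _).const_mul l
        have h2 := (h1.exp).div_const (l * n)
        refine h2.congr_deriv ?_
        rw [div_eq_iff (mul_ne_zero hl0.ne' hn0.ne')]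
        ring
      have hcont : IntervalIntegrable
          (fun s : ℝ => s ^ (n-1) * Real.exp (l * (s ^ n - r ^ n))) volume m r :=
        (((continuous_pow _).mul (Real.continuous_exp.comp (continuous_const.mul
          ((continuous_pow n).sub continuous_const)))).intervalIntegrable m r)
      rw [intervalIntegral.integral_eq_sub_of_hasDerivAt hd hcont]
      rw [sub_self, mul_zero, Real.exp_zero]
      ring
    have pt : ∀ s ∈ Icc m r, f s ≤ c * (s ^ (n-1) * Real.exp (l * (s ^ n - r ^ n))) := by
      intro s hs
      have hs1 : 1 ≤ s := hm1.trans hs.1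
      have hs0 : (0:ℝ) < s := by linarith
      have hsp : (1:ℝ) ≤ s ^ (n-1) := one_le_pow₀ hs1
      have hden : r ^ (2*n-2) / 2 ^ (2*n-2) ≤ s ^ (2*n-2) := by
        calc r ^ (2*n-2) / 2 ^ (2*n-2) = (r/2) ^ (2*n-2) := by rw [div_pow]
          _ ≤ m ^ (2*n-2) := pow_le_pow_left₀ (by linarith) hmhalf _
          _ ≤ s ^ (2*n-2) := pow_le_pow_left₀ hm0.le hs.1 _
      calc f s ≤ Real.exp (l * (s ^ n - r ^ n)) / (r ^ (2*n-2) / 2 ^ (2*n-2)) :=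
            div_le_div_of_nonneg_left (Real.exp_pos _).le (by positivity) hden
        _ = c * Real.exp (l * (s ^ n - r ^ n)) := by
            rw [hc, div_div_eq_mul_div, div_mul_eq_mul_div, mul_comm]
        _ ≤ c * (s ^ (n-1) * Real.exp (l * (s ^ n - r ^ n))) :=
            mul_le_mul_of_nonneg_left (le_mul_of_one_le_left (Real.exp_pos _).le hsp) hc0.le
    have step : ∫ s in m..r, f s ≤ c * ((1 - Real.exp (l * (m ^ n - r ^ n))) / (l * n)) := by
      rw [← hFTC]
      apply intervalIntegral.integral_mono_on hmr (hint m r hm1 hr)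
        (((continuous_const.mul ((continuous_pow _).mul (Real.continuous_exp.comp
          (continuous_const.mul ((continuous_pow n).sub continuous_const))))).intervalIntegrable m r))
        pt
    refine step.trans ?_
    have hn2 : (2:ℝ) ≤ (n:ℝ) := by exact_mod_cast hn
    have hb1 : (1 - Real.exp (l * (m ^ n - r ^ n))) / (l * n) ≤ 1 / l := by
      apply div_le_div₀ (by positivity) ?_ hl0 ?_
      · have := (Real.exp_pos (l * (m ^ n - r ^ n))).le; linarith
      · nlinarith
    calc c * ((1 - Real.exp (l * (m ^ n - r ^ n))) / (l * n)) ≤ c * (1/l) :=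
          mul_le_mul_of_nonneg_left hb1 hc0.le
      _ = (2:ℝ) ^ (2*n-2) / l / r ^ (2*n-2) := by
          rw [hc, div_div, div_mul_div_comm, mul_one, mul_comm (r ^ (2*n-2)) l]
      _ ≤ (2:ℝ) ^ (2*n) / l / r ^ (2*n-2) := by
          gcongr
          · exact one_le_two
          · omega
  have := add_le_add piece1 piece2
  refine this.trans ?_
  rw [div_div, div_div, div_div, ← add_div]
  apply div_le_div_of_nonneg_right ?_ (by positivity) |>.trans_eq rfl
  linarith

lemma aux_inner (n : ℕ) (hn : 2 ≤ n) (M : ℝ) (hM0 : 0 ≤ M) (η : ℝ → ℝ)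
    (hη : ContinuousOn η (Ici 1)) (hM : ∀ s : ℝ, 1 ≤ s → |s ^ (n - 1) * η s| ≤ M)
    (s : ℝ) (hs : 1 ≤ s) :
    |∫ τ in Ici s, η τ * τ ^ ((1:ℤ) - 2 * n)| ≤ M / s ^ (3*n-3) := by
  have hs0 : (0:ℝ) < s := lt_of_lt_of_le one_pos hs
  have hn2 : (2:ℝ) ≤ (n:ℝ) := by exact_mod_cast hn
  have ha : ((2:ℝ) - 3*n) < -1 := by linarith
  have hgint : IntegrableOn (fun τ : ℝ => M * τ ^ ((2:ℝ) - 3*n)) (Ici s) := by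
    rw [integrableOn_Ici_iff_integrableOn_Ioi]
    exact (integrableOn_Ioi_rpow_of_lt ha hs0).const_mul M
  have hpt : ∀ᵐ τ ∂(volume.restrict (Ici s)),
      ‖η τ * τ ^ ((1:ℤ) - 2 * n)‖ ≤ M * τ ^ ((2:ℝ) - 3*n) := by
    refine (ae_restrict_iff' measurableSet_Ici).2 (ae_of_all _ fun τ hτ => ?_)
    have hτ1 : (1:ℝ) ≤ τ := hs.trans hτ
    have hτ0 : (0:ℝ) < τ := lt_of_lt_of_le one_pos hτ1
    have hz : (0:ℝ) < τ ^ ((1:ℤ) - 2 * n) := zpow_pos hτ0 _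
    have hηb : |η τ| ≤ M / τ ^ (n-1) := by
      rw [le_div_iff₀ (by positivity)]
      have := hM τ hτ1
      rw [abs_mul, abs_of_pos (by positivity : (0:ℝ) < τ ^ (n-1))] at this
      linarith [this]
    have hnorm : ‖η τ * τ ^ ((1:ℤ) - 2 * n)‖ = |η τ| * τ ^ ((1:ℤ) - 2 * n) := by
      rw [Real.norm_eq_abs, abs_mul, abs_of_pos hz]
    rw [hnorm]
    calc |η τ| * τ ^ ((1:ℤ) - 2 * n) ≤ (M / τ ^ (n-1)) * τ ^ ((1:ℤ) - 2 * n) :=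
          mul_le_mul_of_nonneg_right hηb hz.le
      _ = M * τ ^ ((2:ℝ) - 3*n) := by
          rw [show ((2:ℝ) - 3*(n:ℝ)) = (((2 - 3*(n:ℤ)):ℤ):ℝ) by push_cast; ring,
            Real.rpow_intCast]
          rw [div_mul_eq_mul_div, ← zpow_natCast τ (n-1), mul_div_assoc,
            ← zpow_sub₀ hτ0.ne']
          congr 2
          push_cast [Nat.cast_sub (by omega : 1 ≤ n)]
          ring
  have hb := norm_integral_le_of_norm_le hgint hpt
  rw [Real.norm_eq_abs] at hb
  refine hb.trans ?_
  have hval : ∫ τ in Ici s, M * τ ^ ((2:ℝ) - 3*n) =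
      M * (-s ^ (((2:ℝ) - 3*n)+1) / (((2:ℝ) - 3*n)+1)) := by
    rw [MeasureTheory.integral_const_mul, MeasureTheory.integral_Ici_eq_integral_Ioi,
      integral_Ioi_rpow_of_lt ha hs0]
  rw [hval]
  have hsp : s ^ (((2:ℝ) - 3*n)+1) = (s ^ (3*n-3) : ℝ)⁻¹ := by
    rw [show ((2:ℝ) - 3*n) + 1 = -((3*n-3 : ℕ) : ℝ) by
      push_cast [Nat.cast_sub (by omega : 3 ≤ 3*n)]; ring]
    rw [Real.rpow_neg hs0.le, Real.rpow_natCast]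
  rw [hsp, show ((2:ℝ) - 3*n) + 1 = -(3*(n:ℝ) - 3) by ring, neg_div_neg_eq]
  have h1 : (0:ℝ) < (s ^ (3*n-3) : ℝ)⁻¹ := by positivity
  have h2 : (1:ℝ) ≤ 3*(n:ℝ) - 3 := by linarith
  calc M * ((s ^ (3*n-3) : ℝ)⁻¹ / (3*(n:ℝ) - 3))
      ≤ M * ((s ^ (3*n-3) : ℝ)⁻¹ / 1) :=
        mul_le_mul_of_nonneg_left (div_le_div_of_nonneg_left h1.le one_pos h2) hM0
    _ = M / s ^ (3*n-3) := by rw [div_one, div_eq_mul_inv]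

theorem stmt_7 (n : ℕ) (hn : 2 ≤ n) :
    ∃ C > 0, ∀ (mb κ M : ℝ) (η : ℝ → ℝ), 0 < mb → 0 < κ → mb ≤ κ →
      ContinuousOn η (Ici 1) →
      (∀ s : ℝ, 1 ≤ s → |s ^ (n - 1) * η s| ≤ M) →
      ∀ r : ℝ, 1 ≤ r →
        |∫ s in (1:ℝ)..r, s ^ (n - 1) * Real.exp ((κ / mb) * (s ^ n - r ^ n)) *
            (∫ τ in Ici s, η τ * τ ^ ((1:ℤ) - 2 * n))| ≤
          C * M * (mb / κ) / r ^ (2 * (n - 1)) := by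
  refine ⟨(2:ℝ) ^ (2*n) + 16, by positivity, ?_⟩
  intro mb κ M η hmb hκ hmκ hη hM r hr
  have hl : 1 ≤ κ / mb := (one_le_div hmb).2 hmκ
  have hl0 : 0 < κ / mb := by positivity
  have hM0 : 0 ≤ M := (abs_nonneg _).trans (hM 1 le_rfl)
  have hr0 : (0:ℝ) < r := lt_of_lt_of_le one_pos hr
  have hpt : ∀ᵐ t ∂(volume.restrict (uIoc (1:ℝ) r)),
      ‖t ^ (n - 1) * Real.exp ((κ / mb) * (t ^ n - r ^ n)) *
          (∫ τ in Ici t, η τ * τ ^ ((1:ℤ) - 2 * n))‖ ≤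
        M * (Real.exp ((κ / mb) * (t ^ n - r ^ n)) / t ^ (2*n-2)) := by
    refine (ae_restrict_iff' measurableSet_uIoc).2 (ae_of_all _ fun t ht => ?_)
    rw [uIoc_of_le hr] at ht
    have ht1 : (1:ℝ) ≤ t := ht.1.le
    have ht0 : (0:ℝ) < t := lt_of_lt_of_le one_pos ht1
    have hinner := aux_inner n hn M hM0 η hη hM t ht1
    have hpos : (0:ℝ) < t ^ (n-1) * Real.exp ((κ / mb) * (t ^ n - r ^ n)) := by positivity
    rw [Real.norm_eq_abs, abs_mul, abs_of_pos hpos]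
    calc t ^ (n-1) * Real.exp ((κ / mb) * (t ^ n - r ^ n)) *
          |∫ τ in Ici t, η τ * τ ^ ((1:ℤ) - 2 * n)|
        ≤ t ^ (n-1) * Real.exp ((κ / mb) * (t ^ n - r ^ n)) * (M / t ^ (3*n-3)) :=
          mul_le_mul_of_nonneg_left hinner hpos.le
      _ = M * (Real.exp ((κ / mb) * (t ^ n - r ^ n)) / t ^ (2*n-2)) := by
          rw [show 3*n-3 = (n-1) + (2*n-2) from by omega, pow_add]
          field_simp
  have hgi : IntervalIntegrable
      (fun t : ℝ => M * (Real.exp ((κ / mb) * (t ^ n - r ^ n)) / t ^ (2*n-2)))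
      volume 1 r := by
    refine ContinuousOn.intervalIntegrable ?_
    rw [uIcc_of_le hr]
    apply continuousOn_const.mul
    apply ContinuousOn.div
    · exact (Real.continuous_exp.comp (continuous_const.mul
        ((continuous_pow n).sub continuous_const))).continuousOn
    · exact (continuous_pow _).continuousOn
    · intro t htt
      have : (1:ℝ) ≤ t := htt.1
      positivity
  have key := intervalIntegral.norm_integral_le_abs_of_norm_le hpt hgi
  rw [Real.norm_eq_abs] at key
  refine key.trans ?_
  have hnn : 0 ≤ ∫ t in (1:ℝ)..r,
      M * (Real.exp ((κ / mb) * (t ^ n - r ^ n)) / t ^ (2*n-2)) := by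
    apply intervalIntegral.integral_nonneg hr
    intro t htt
    have : (1:ℝ) ≤ t := htt.1
    positivity
  rw [abs_of_nonneg hnn, intervalIntegral.integral_const_mul]
  have hJ := aux_J n hn (κ / mb) r hl hr
  calc M * ∫ t in (1:ℝ)..r, Real.exp ((κ / mb) * (t ^ n - r ^ n)) / t ^ (2*n-2)
      ≤ M * (((2:ℝ) ^ (2*n) + 16) / (κ / mb) / r ^ (2*n-2)) :=
        mul_le_mul_of_nonneg_left hJ hM0
    _ = ((2:ℝ) ^ (2*n) + 16) * M * (mb / κ) / r ^ (2 * (n - 1)) := by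
        rw [show 2 * (n-1) = 2*n-2 from by omega]
        field_simp
end

section
/- Let n ≥ 2, T > 0, m_b > 0, ρ₊ > 0, and let f : Q(T) → ℝ be such that x ↦ f(x,t) is C² for each t ∈ [0,T], with appropriate integrability. Suppose r, v : Q(T) → ℝ satisfy r ≥ 1, (1/(2ρ₊)) ≤ v ≤ 2/ρ₊, and ∂_x r = r^{1−n} v. Then for every k ∈ ℕ and every ε ∈ (0,1), sup_{x ≥ −m_b t} r(x,t)^k (∂_x f(x,t))² ≤ C max{1, ρ₊^{−1}} (1 + 1/ε) ∫_{S(t)} r^k (∂_x f)² dx + ε ∫_{S(t)} (r^{k+2(n−1)}/v) (∂_x² f)² dx, where S(t) = [−m_b t, ∞) and C depends only on n. -/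
open MeasureTheory Set

theorem stmt_11 (n : ℕ) (hn : 2 ≤ n) :
    ∃ C > 0, ∀ (T mb rp : ℝ) (f fx fxx r v : ℝ → ℝ → ℝ),
      0 < T → 0 < mb → 0 < rp →
      (∀ t ∈ Icc (0:ℝ) T, ∀ x : ℝ, -mb * t ≤ x →
        HasDerivAt (fun y => f y t) (fx x t) x ∧
        HasDerivAt (fun y => fx y t) (fxx x t) x) →
      (∀ t ∈ Icc (0:ℝ) T, ∀ x : ℝ, -mb * t ≤ x →
        1 ≤ r x t ∧ 1 / (2 * rp) ≤ v x t ∧ v x t ≤ 2 / rp ∧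
        HasDerivAt (fun y => r y t) (v x t / (r x t) ^ (n - 1)) x) →
      ∀ k : ℕ, ∀ t ∈ Icc (0:ℝ) T,
      IntegrableOn (fun x => (r x t) ^ k * (fx x t) ^ 2) (Ici (-mb * t)) →
      IntegrableOn (fun x => (r x t) ^ (k + 2 * (n - 1)) / v x t * (fxx x t) ^ 2)
        (Ici (-mb * t)) →
      ∀ ε : ℝ, 0 < ε → ε < 1 →
      ∀ x : ℝ, -mb * t ≤ x →
        (r x t) ^ k * (fx x t) ^ 2 ≤
          C * max 1 rp⁻¹ * (1 + 1 / ε) *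
            (∫ y in Ici (-mb * t), (r y t) ^ k * (fx y t) ^ 2) +
          ε * ∫ y in Ici (-mb * t),
            (r y t) ^ (k + 2 * (n - 1)) / v y t * (fxx y t) ^ 2 := by
  refine ⟨2, by norm_num, ?_⟩
  intro T mb rp f fx fxx r v hT hmb hrp hf hr k t ht hIg hIh ε hε hε1 x hx
  set a : ℝ := -mb * t with ha
  set M : ℝ := max 1 rp⁻¹ with hM
  have hM1 : (1:ℝ) ≤ M := le_max_left _ _
  have hM0 : (0:ℝ) < M := lt_of_lt_of_le one_pos hM1
  have hrpM : rp⁻¹ ≤ M := le_max_right _ _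
  set g : ℝ → ℝ := fun y => r y t ^ k * fx y t ^ 2 with hgdef
  set h : ℝ → ℝ := fun y => r y t ^ (k + 2 * (n - 1)) / v y t * fxx y t ^ 2 with hhdef
  set φ : ℝ → ℝ := fun y => (2 * M / ε) * g y + ε * h y with hφdef
  set G' : ℝ → ℝ := fun y =>
    ((k : ℝ) * r y t ^ (k - 1) * (v y t / r y t ^ (n - 1))) * fx y t ^ 2 +
      r y t ^ k * ((2 : ℝ) * fx y t ^ 1 * fxx y t) with hG'def
  have hIg' : IntegrableOn g (Ici a) := hIg
  have hIh' : IntegrableOn h (Ici a) := hIh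
  -- pointwise facts
  have hgnonneg : ∀ y, a ≤ y → 0 ≤ g y := by
    intro y hy
    obtain ⟨hR1, -, -, -⟩ := hr t ht y hy
    have : (0:ℝ) ≤ r y t := le_trans zero_le_one hR1
    exact mul_nonneg (pow_nonneg this k) (sq_nonneg _)
  have hhnonneg : ∀ y, a ≤ y → 0 ≤ h y := by
    intro y hy
    obtain ⟨hR1, hVlo, -, -⟩ := hr t ht y hy
    have hV0 : 0 < v y t := lt_of_lt_of_le (by positivity) hVlo
    have : (0:ℝ) ≤ r y t := le_trans zero_le_one hR1
    exact mul_nonneg (div_nonneg (pow_nonneg this _) hV0.le) (sq_nonneg _)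
  have hφnonneg : ∀ y, a ≤ y → 0 ≤ φ y := by
    intro y hy
    have := hgnonneg y hy
    have := hhnonneg y hy
    exact add_nonneg (mul_nonneg (by positivity) (hgnonneg y hy))
      (mul_nonneg hε.le (hhnonneg y hy))
  have hGd : ∀ y, a ≤ y → HasDerivAt g (G' y) y := by
    intro y hy
    have h1 := (hf t ht y hy).2
    have h2 := (hr t ht y hy).2.2.2
    have := (h2.pow k).mul (h1.pow 2)
    refine this.congr_deriv ?_
    norm_num [hG'def, Pi.pow_apply]
  -- key bound for the second term
  have habs2 : ∀ y, a ≤ y →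
      |r y t ^ k * ((2:ℝ) * fx y t ^ 1 * fxx y t)| ≤ (2 * M / ε) * g y + ε * h y := by
    intro y hy
    obtain ⟨hR1, hVlo, hVhi, -⟩ := hr t ht y hy
    have hV0 : 0 < v y t := lt_of_lt_of_le (by positivity) hVlo
    have hR0 : (0:ℝ) < r y t := lt_of_lt_of_le one_pos hR1
    have hRk : (0:ℝ) ≤ r y t ^ k := (pow_pos hR0 k).le
    have hP1 : (1:ℝ) ≤ r y t ^ (2 * (n - 1)) := one_le_pow₀ hR1
    have hVM : v y t ≤ 2 * M := by
      have h2 : 2 / rp = 2 * rp⁻¹ := by ring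
      calc v y t ≤ 2 / rp := hVhi
        _ = 2 * rp⁻¹ := h2
        _ ≤ 2 * M := by nlinarith
    have hmain : 2 * |fx y t| * |fxx y t| ≤ 2 * M / ε * fx y t ^ 2 + ε / (2 * M) * fxx y t ^ 2 := by
      rw [div_mul_eq_mul_div, div_mul_eq_mul_div,
        div_add_div _ _ (ne_of_gt hε) (by positivity : (2 * M : ℝ) ≠ 0),
        le_div_iff₀ (by positivity), ← sq_abs (fx y t), ← sq_abs (fxx y t)]
      nlinarith [sq_nonneg (2 * M * |fx y t| - ε * |fxx y t|), abs_nonneg (fx y t),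
        abs_nonneg (fxx y t)]
    have hfrac : (1:ℝ) / (2 * M) ≤ r y t ^ (2 * (n - 1)) / v y t := by
      rw [div_le_div_iff₀ (by positivity) hV0]
      nlinarith
    calc |r y t ^ k * ((2:ℝ) * fx y t ^ 1 * fxx y t)|
        = r y t ^ k * (2 * |fx y t| * |fxx y t|) := by
          rw [abs_mul, abs_of_nonneg hRk, abs_mul, abs_mul]
          norm_num
      _ ≤ r y t ^ k * (2 * M / ε * fx y t ^ 2 + ε / (2 * M) * fxx y t ^ 2) :=
          mul_le_mul_of_nonneg_left hmain hRk
      _ = 2 * M / ε * (r y t ^ k * fx y t ^ 2)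
          + ε * ((1 / (2 * M)) * (r y t ^ k * fxx y t ^ 2)) := by ring
      _ ≤ 2 * M / ε * (r y t ^ k * fx y t ^ 2)
          + ε * ((r y t ^ (2 * (n - 1)) / v y t) * (r y t ^ k * fxx y t ^ 2)) := by
          have hnn : (0:ℝ) ≤ r y t ^ k * fxx y t ^ 2 := mul_nonneg hRk (sq_nonneg _)
          exact add_le_add le_rfl (mul_le_mul_of_nonneg_left
            (mul_le_mul_of_nonneg_right hfrac hnn) hε.le)
      _ = (2 * M / ε) * g y + ε * h y := by
          simp only [hgdef, hhdef, pow_add]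
          ring
  have hterm1nonneg : ∀ y, a ≤ y →
      0 ≤ ((k : ℝ) * r y t ^ (k - 1) * (v y t / r y t ^ (n - 1))) * fx y t ^ 2 := by
    intro y hy
    obtain ⟨hR1, hVlo, -, -⟩ := hr t ht y hy
    have hV0 : 0 < v y t := lt_of_lt_of_le (by positivity) hVlo
    have hR0 : (0:ℝ) < r y t := lt_of_lt_of_le one_pos hR1
    exact mul_nonneg (mul_nonneg (mul_nonneg (Nat.cast_nonneg k) (pow_nonneg hR0.le _))
      (div_nonneg hV0.le (pow_nonneg hR0.le _))) (sq_nonneg _)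
  have hnegG' : ∀ y, a ≤ y → -G' y ≤ φ y := by
    intro y hy
    have h1 := hterm1nonneg y hy
    have h2 := habs2 y hy
    have h3 := neg_le_abs (r y t ^ k * ((2:ℝ) * fx y t ^ 1 * fxx y t))
    have he : -G' y = -(((k : ℝ) * r y t ^ (k - 1) * (v y t / r y t ^ (n - 1))) * fx y t ^ 2)
        + -(r y t ^ k * ((2:ℝ) * fx y t ^ 1 * fxx y t)) := by
      simp only [hG'def]; ring
    have hφe : φ y = (2 * M / ε) * g y + ε * h y := by simp only [hφdef]
    rw [he, hφe]
    linarith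
  have habsG' : ∀ y, a ≤ y → |G' y| ≤ ((k : ℝ) * (2 * M)) * g y + φ y := by
    intro y hy
    obtain ⟨hR1, hVlo, hVhi, -⟩ := hr t ht y hy
    have hV0 : 0 < v y t := lt_of_lt_of_le (by positivity) hVlo
    have hR0 : (0:ℝ) < r y t := lt_of_lt_of_le one_pos hR1
    have hVM : v y t ≤ 2 * M := by
      have h2 : 2 / rp = 2 * rp⁻¹ := by ring
      calc v y t ≤ 2 / rp := hVhi
        _ = 2 * rp⁻¹ := h2
        _ ≤ 2 * M := by nlinarith
    have ht1 : ((k : ℝ) * r y t ^ (k - 1) * (v y t / r y t ^ (n - 1))) * fx y t ^ 2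
        ≤ ((k : ℝ) * (2 * M)) * g y := by
      have hle1 : r y t ^ (k - 1) ≤ r y t ^ k := pow_le_pow_right₀ hR1 (Nat.sub_le k 1)
      have hle2 : v y t / r y t ^ (n - 1) ≤ v y t :=
        div_le_self hV0.le (one_le_pow₀ hR1)
      have hle3 : v y t / r y t ^ (n - 1) ≤ 2 * M := hle2.trans hVM
      have hd0 : 0 ≤ v y t / r y t ^ (n - 1) := div_nonneg hV0.le (pow_nonneg hR0.le _)
      simp only [hgdef]
      calc ((k : ℝ) * r y t ^ (k - 1) * (v y t / r y t ^ (n - 1))) * fx y t ^ 2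
          ≤ ((k : ℝ) * r y t ^ k * (2 * M)) * fx y t ^ 2 := by
            have hkc : (0:ℝ) ≤ (k : ℝ) := Nat.cast_nonneg k
            have hR0' : (0:ℝ) ≤ r y t := hR0.le
            have hkk : (0:ℝ) ≤ (k:ℝ) * r y t ^ k := by positivity
            exact mul_le_mul_of_nonneg_right
              (mul_le_mul (mul_le_mul_of_nonneg_left hle1 hkc) hle3 hd0 hkk) (sq_nonneg _)
        _ = ((k : ℝ) * (2 * M)) * (r y t ^ k * fx y t ^ 2) := by ring
    have h2 := habs2 y hy
    calc |G' y| ≤ ((k : ℝ) * r y t ^ (k - 1) * (v y t / r y t ^ (n - 1))) * fx y t ^ 2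
        + |r y t ^ k * ((2:ℝ) * fx y t ^ 1 * fxx y t)| := by
          simp only [hG'def]
          refine (abs_add_le _ _).trans ?_
          rw [abs_of_nonneg (hterm1nonneg y hy)]
      _ ≤ ((k : ℝ) * (2 * M)) * g y + φ y := by
          simp only [hφdef]
          exact add_le_add ht1 h2
  -- integrability
  have hφint : IntegrableOn φ (Ici a) := (hIg'.const_mul _).add (hIh'.const_mul _)
  have hφae : 0 ≤ᵐ[volume.restrict (Ici a)] φ :=
    (ae_restrict_iff' measurableSet_Ici).mpr (ae_of_all _ fun y hy => hφnonneg y hy)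
  -- key step : for each y' in [x, x+1]
  have hKx : ∀ y' ∈ Icc x (x + 1), g x ≤ g y' + ∫ y in Ici a, φ y := by
    intro y' hy'
    have hxy : x ≤ y' := hy'.1
    have hsub : Icc x y' ⊆ Ici a := fun z hz => le_trans hx hz.1
    have hg'meas : AEStronglyMeasurable G' (volume.restrict (Icc x y')) := by
      refine ((measurable_deriv g).aestronglyMeasurable.restrict).congr ?_
      exact (ae_restrict_iff' measurableSet_Icc).mpr
        (ae_of_all _ fun z hz => (hGd z (hsub hz)).deriv)
    have hg'int : IntegrableOn G' (Icc x y') := by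
      have hbd : IntegrableOn (fun z => ((k : ℝ) * (2 * M)) * g z + φ z) (Ici a) :=
        (hIg'.const_mul _).add hφint
      refine Integrable.mono' (g := fun z => ((k : ℝ) * (2 * M)) * g z + φ z)
        (hbd.mono_set hsub) hg'meas ?_
      exact (ae_restrict_iff' measurableSet_Icc).mpr
        (ae_of_all _ fun z hz => by simpa [Real.norm_eq_abs] using habsG' z (hsub hz))
    have hFTC : ∫ z in x..y', G' z = g y' - g x := by
      refine intervalIntegral.integral_eq_sub_of_hasDerivAt
        (fun z hz => hGd z (hsub (by rwa [uIcc_of_le hxy] at hz))) ?_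
      refine IntegrableOn.intervalIntegrable ?_
      rwa [uIcc_of_le hxy]
    have hφintIcc : IntegrableOn φ (Icc x y') := hφint.mono_set hsub
    have h2 : ∫ z in x..y', -G' z ≤ ∫ z in x..y', φ z := by
      refine intervalIntegral.integral_mono_on hxy ?_ ?_ (fun z hz => hnegG' z (hsub hz))
      · refine IntegrableOn.intervalIntegrable ?_
        rw [uIcc_of_le hxy]; exact hg'int.neg
      · refine IntegrableOn.intervalIntegrable ?_
        rwa [uIcc_of_le hxy]
    have h3 : ∫ z in x..y', φ z ≤ ∫ y in Ici a, φ y := by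
      rw [intervalIntegral.integral_of_le hxy]
      exact setIntegral_mono_set hφint hφae
        ((Ioc_subset_Icc_self.trans hsub).eventuallyLE)
    have h1 : -(∫ z in x..y', G' z) = ∫ z in x..y', -G' z :=
      (intervalIntegral.integral_neg).symm
    linarith [hFTC, h1 ▸ (h2.trans h3)]
  -- average over [x, x+1]
  have hgIcc : IntegrableOn g (Icc x (x + 1)) :=
    hIg'.mono_set (fun z hz => le_trans hx hz.1)
  have hgiv : IntervalIntegrable g volume x (x + 1) := by
    refine IntegrableOn.intervalIntegrable ?_
    rwa [uIcc_of_le (by linarith)]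
  have hgx : g x ≤ (∫ z in x..x+1, g z) + ∫ y in Ici a, φ y := by
    have hle : x ≤ x + 1 := by linarith
    have c0 : g x = ∫ _ in x..x+1, g x := by
      rw [intervalIntegral.integral_const]
      simp
    rw [c0]
    have : (∫ z in x..x+1, g z) + ∫ y in Ici a, φ y
        = ∫ z in x..x+1, (g z + ∫ y in Ici a, φ y) := by
      rw [intervalIntegral.integral_add hgiv intervalIntegrable_const,
        intervalIntegral.integral_const]
      simp
    rw [this]
    refine intervalIntegral.integral_mono_on hle intervalIntegrable_const
      (hgiv.add intervalIntegrable_const) (fun z hz => hKx z hz)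
  have h4 : ∫ z in x..x+1, g z ≤ ∫ y in Ici a, g y := by
    rw [intervalIntegral.integral_of_le (by linarith : x ≤ x + 1)]
    refine setIntegral_mono_set hIg'
      ((ae_restrict_iff' measurableSet_Ici).mpr (ae_of_all _ fun y hy => hgnonneg y hy))
      ?_
    exact ((Ioc_subset_Icc_self.trans (fun z hz => le_trans hx hz.1)).eventuallyLE :
      (Ioc x (x+1) : Set ℝ) ≤ᵐ[volume] Ici a)
  have hφval : ∫ y in Ici a, φ y
      = (2 * M / ε) * (∫ y in Ici a, g y) + ε * ∫ y in Ici a, h y := by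
    simp only [hφdef]
    rw [integral_add (hIg'.const_mul _) (hIh'.const_mul _)]
    rw [integral_const_mul, integral_const_mul]
  have hIg0 : 0 ≤ ∫ y in Ici a, g y :=
    setIntegral_nonneg measurableSet_Ici (fun y hy => hgnonneg y hy)
  have hfinal : g x ≤ (∫ y in Ici a, g y) + (2 * M / ε) * (∫ y in Ici a, g y)
      + ε * ∫ y in Ici a, h y := by
    rw [hφval] at hgx
    linarith
  have hcoef : (∫ y in Ici a, g y) + (2 * M / ε) * (∫ y in Ici a, g y)
      ≤ 2 * M * (1 + 1 / ε) * (∫ y in Ici a, g y) := by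
    have h2M : (1:ℝ) ≤ 2 * M := by linarith
    have : 2 * M * (1 + 1 / ε) = 2 * M + 2 * M / ε := by
      field_simp
    rw [this]
    nlinarith
  show g x ≤ 2 * M * (1 + 1 / ε) * (∫ y in Ici a, g y) + ε * ∫ y in Ici a, h y
  linarith
end

section
/- Let n ≥ 2, m > 0, κ > 0 with m ≤ κ, and c > 0. Define I(r) = ∫_1^r s^{1−n} exp((κ/m)(s^n − r^n)) ds. Then there exists R₁ > 1 depending only on κ/m lower bound (in fact R₁ with 1 − e^{(κ/m)(1−r^n)} ≥ 1/2 for r ≥ R₁; one may take R₁ = 2^{1/n} since κ/m ≥ 1) such that I(r) ≥ (m/(2nκ)) r^{2(1−n)} for all r ≥ R₁. -/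
theorem stmt_17 (n : ℕ) (hn : 2 ≤ n) (m κ : ℝ) (hm : 0 < m) (hκ : 0 < κ)
    (hmκ : m ≤ κ) :
    ∃ R₁ > 1, ∀ r : ℝ, R₁ ≤ r →
      (m / (2 * n * κ)) / r ^ (2 * (n - 1)) ≤
        ∫ s in (1:ℝ)..r, (1 / s ^ (n - 1)) * Real.exp ((κ / m) * (s ^ n - r ^ n)) := by
  refine ⟨2, by norm_num, fun r hr => ?_⟩
  have hn0 : (n : ℝ) ≠ 0 := by positivity
  set c := κ / m with hc
  have hc1 : 1 ≤ c := (one_le_div hm).2 hmκ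
  have hc0 : 0 < c := lt_of_lt_of_le one_pos hc1
  have hr1 : (1:ℝ) ≤ r := by linarith
  have hrpos : 0 < r := by linarith
  -- antiderivative
  have hderiv : ∀ s : ℝ, HasDerivAt (fun s => (m / (n * κ)) * Real.exp (c * (s ^ n - r ^ n)))
      (s ^ (n - 1) * Real.exp (c * (s ^ n - r ^ n))) s := by
    intro s
    have h1 : HasDerivAt (fun s : ℝ => s ^ n) ((n : ℝ) * s ^ (n - 1)) s := by
      simpa using hasDerivAt_pow n s
    have h2 : HasDerivAt (fun s : ℝ => c * (s ^ n - r ^ n)) (c * ((n : ℝ) * s ^ (n - 1))) s :=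
      (h1.sub_const _).const_mul c
    have h3 := h2.exp.const_mul (m / (n * κ))
    refine h3.congr_deriv ?_
    rw [hc]
    field_simp
  have hcont : Continuous fun s : ℝ => s ^ (n - 1) * Real.exp (c * (s ^ n - r ^ n)) := by
    fun_prop
  have hint : ∫ s in (1:ℝ)..r, s ^ (n - 1) * Real.exp (c * (s ^ n - r ^ n))
      = (m / (n * κ)) * (1 - Real.exp (c * (1 - r ^ n))) := by
    rw [intervalIntegral.integral_eq_sub_of_hasDerivAt (fun s _ => hderiv s)
      (hcont.intervalIntegrable 1 r)]
    simp [mul_sub]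
  -- exp bound
  have hrn : (4:ℝ) ≤ r ^ n := by
    calc (4:ℝ) = 2 ^ 2 := by norm_num
    _ ≤ 2 ^ n := pow_le_pow_right₀ one_le_two hn
    _ ≤ r ^ n := pow_le_pow_left₀ (by norm_num) hr n
  have hexp : Real.exp (c * (1 - r ^ n)) ≤ 1 / 2 := by
    have h1 : c * (1 - r ^ n) ≤ -3 := by nlinarith
    calc Real.exp (c * (1 - r ^ n)) ≤ Real.exp (-3) := Real.exp_le_exp.2 h1
    _ = 1 / Real.exp 3 := by rw [Real.exp_neg]; ring
    _ ≤ 1 / 2 := by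
        apply one_div_le_one_div_of_le (by norm_num)
        nlinarith [Real.add_one_le_exp (3:ℝ)]
  -- pointwise comparison and integral monotonicity
  have hmono : ∫ s in (1:ℝ)..r, (1 / r ^ (2 * (n - 1))) * (s ^ (n - 1) * Real.exp (c * (s ^ n - r ^ n)))
      ≤ ∫ s in (1:ℝ)..r, (1 / s ^ (n - 1)) * Real.exp (c * (s ^ n - r ^ n)) := by
    apply intervalIntegral.integral_mono_on hr1
    · exact (continuous_const.mul hcont).intervalIntegrable _ _
    · apply ContinuousOn.intervalIntegrable
      apply ContinuousOn.mul
      · apply ContinuousOn.div continuousOn_const (by fun_prop)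
        intro s hs
        rw [Set.uIcc_of_le hr1] at hs
        have : (1:ℝ) ≤ s := hs.1
        positivity
      · fun_prop
    · intro s hs
      have hs1 : (1:ℝ) ≤ s := hs.1
      have hsr : s ≤ r := hs.2
      have hs0 : 0 < s := by linarith
      have hE : 0 < Real.exp (c * (s ^ n - r ^ n)) := Real.exp_pos _
      have key : s ^ (n - 1) / r ^ (2 * (n - 1)) ≤ 1 / s ^ (n - 1) := by
        rw [div_le_div_iff₀ (by positivity) (by positivity)]
        have : s ^ (n - 1) * s ^ (n - 1) ≤ r ^ (n - 1) * r ^ (n - 1) := by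
          have := pow_le_pow_left₀ (by linarith : (0:ℝ) ≤ s) hsr (n - 1)
          nlinarith [pow_pos hs0 (n-1)]
        calc s ^ (n - 1) * s ^ (n - 1) ≤ r ^ (n - 1) * r ^ (n - 1) := this
        _ = 1 * r ^ (2 * (n - 1)) := by rw [two_mul, pow_add]; ring
      calc (1 / r ^ (2 * (n - 1))) * (s ^ (n - 1) * Real.exp (c * (s ^ n - r ^ n)))
          = (s ^ (n - 1) / r ^ (2 * (n - 1))) * Real.exp (c * (s ^ n - r ^ n)) := by ring
        _ ≤ (1 / s ^ (n - 1)) * Real.exp (c * (s ^ n - r ^ n)) :=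
            mul_le_mul_of_nonneg_right key hE.le
  rw [intervalIntegral.integral_const_mul, hint] at hmono
  refine le_trans ?_ hmono
  have h12 : (1:ℝ)/2 ≤ 1 - Real.exp (c * (1 - r ^ n)) := by linarith
  have h1 : m / (n * κ) * (1/2) ≤ m / (n * κ) * (1 - Real.exp (c * (1 - r ^ n))) :=
    mul_le_mul_of_nonneg_left h12 (by positivity)
  have h2 : 1 / r ^ (2 * (n - 1)) * (m / (n * κ) * (1/2))
      ≤ 1 / r ^ (2 * (n - 1)) * (m / (n * κ) * (1 - Real.exp (c * (1 - r ^ n)))) :=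
    mul_le_mul_of_nonneg_left h1 (by positivity)
  refine le_trans (le_of_eq ?_) h2
  have hrA : (r ^ (2 * (n - 1)) : ℝ) ≠ 0 := by positivity
  field_simp
end
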